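/- In the semiring S = M₂(ℝ⁺), for every r ∈ ℝ⁺ with r ≠ 0, the set Nᵣ = { [[ra, a],[rb, b]] : a, b ∈ ℝ⁺ } is a subtractive left ideal of S. -/

import Mathlib

/-- The 2×2 matrix semiring over the nonnegative reals. -/
abbrev M2 : Type := Matrix (Fin 2) (Fin 2) NNReal

/-- A subset of the semiring is a left ideal. -/
def IsLeftIdeal (I : Set M2) : Prop :=
  0 ∈ I ∧ (∀ x ∈ I, ∀ y ∈ I, x + y ∈ I) ∧ ∀ s : M2, ∀ x ∈ I, s * x ∈ I

/-- A subset is subtractive: `s + x = y` with `x, y ∈ I` implies `s ∈ I`. -/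
def IsSubtractive (I : Set M2) : Prop :=
  ∀ s x y : M2, x ∈ I → y ∈ I → s + x = y → s ∈ I

/-- `Nᵣ = { [[ra,a],[rb,b]] : a, b ∈ ℝ⁺ }`. -/
def Nr (r : NNReal) : Set M2 :=
  {A | ∃ a b : NNReal, A 0 0 = r * a ∧ A 0 1 = a ∧ A 1 0 = r * b ∧ A 1 1 = b}

/-! `Nᵣ` is the set of matrices whose first column is `r` times the second. Left multiplication
acts on each column separately, so it preserves this relation, and the subtractive property
follows from additive cancellation in `ℝ⁺`. -/

lemma mem_Nr_iff {r : NNReal} {A : M2} : A ∈ Nr r ↔ ∀ i, A i 0 = r * A i 1 := by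
  constructor
  · rintro ⟨a, b, h00, h01, h10, h11⟩ i
    fin_cases i <;> simp [h00, h01, h10, h11]
  · intro h
    exact ⟨A 0 1, A 1 1, h 0, rfl, h 1, rfl⟩

lemma isLeftIdeal_Nr (r : NNReal) : IsLeftIdeal (Nr r) := by
  simp only [IsLeftIdeal, mem_Nr_iff]
  refine ⟨fun i => by simp, fun x hx y hy i => by simp [hx i, hy i, mul_add], fun s x hx i => ?_⟩
  simp only [Matrix.mul_apply, hx, Finset.mul_sum, mul_left_comm]

lemma isSubtractive_Nr (r : NNReal) : IsSubtractive (Nr r) := by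
  intro s x y hx hy hsum
  rw [mem_Nr_iff] at hx hy ⊢
  intro i
  have hcol (j : Fin 2) : s i j + x i j = y i j := by rw [← hsum, Matrix.add_apply]
  apply add_right_cancel (b := x i 0)
  calc s i 0 + x i 0 = y i 0 := hcol 0
    _ = r * (s i 1 + x i 1) := by rw [hy i, hcol 1]
    _ = r * s i 1 + x i 0 := by rw [mul_add, hx i]

theorem stmt_7_general (r : NNReal) : IsLeftIdeal (Nr r) ∧ IsSubtractive (Nr r) :=
  ⟨isLeftIdeal_Nr r, isSubtractive_Nr r⟩

/-- For every `r ∈ ℝ⁺ \ {0}`, `Nᵣ` is a subtractive left ideal of `M₂(ℝ⁺)`. -/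
theorem stmt_7 (r : NNReal) (hr : r ≠ 0) : IsLeftIdeal (Nr r) ∧ IsSubtractive (Nr r) :=
  stmt_7_general r
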